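/- Suppose 𝒰 is nonempty. For every k ≥ 1 and every x₀ ∈ ℝ^n, x₀ ∈ 𝒮_k if and only if there exist feedback policies π_0 ∈ 𝒰 and π_t : 𝒲^t → 𝒰 for t = 1, …, k−1 such that for every disturbance realization (w_0, …, w_{k−1}) ∈ 𝒲^k, the trajectory defined by x_0 = x₀ and x_{t+1} = A x_t + B π_t(w_0, …, w_{t−1}) + w_t satisfies x_k ∈ 𝒳. -/
import Mathlib


open Matrix Set

/-- Trajectory `x_{t+1} = A x_t + B π_t(w_0, …, w_{t-1}) + w_t` generated by a
causal disturbance-feedback policy `π`, starting from `x0`. -/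
noncomputable def polTraj {n p : ℕ} (A : Matrix (Fin n) (Fin n) ℝ)
    (B : Matrix (Fin n) (Fin p) ℝ)
    (π : (t : ℕ) → (Fin t → (Fin n → ℝ)) → (Fin p → ℝ))
    (x0 : Fin n → ℝ) (w : ℕ → Fin n → ℝ) : ℕ → Fin n → ℝ
  | 0 => x0
  | t + 1 => A.mulVec (polTraj A B π x0 w t) +
      B.mulVec (π t (fun s => w s)) + w t

lemma fin_window_eq_cons (w : ℕ → Fin n → ℝ) (t : ℕ) :
    (fun s : Fin (t + 1) => w s) =
      Fin.cons (w 0) (fun s : Fin t => w (s + 1)) := by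
  funext s
  refine Fin.cases ?_ (fun i => ?_) s
  · simp
  · simp [Fin.cons_succ]

/-- Shifting a trajectory by one step. -/
lemma polTraj_shift {n p : ℕ} (A : Matrix (Fin n) (Fin n) ℝ)
    (B : Matrix (Fin n) (Fin p) ℝ)
    (π : (t : ℕ) → (Fin t → (Fin n → ℝ)) → (Fin p → ℝ))
    (x0 : Fin n → ℝ) (w : ℕ → Fin n → ℝ) (t : ℕ) :
    polTraj A B π x0 w (t + 1) =
      polTraj A B (fun t ws => π (t + 1) (Fin.cons (w 0) ws))
        (A.mulVec x0 + B.mulVec (π 0 (fun s => w s)) + w 0)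
        (fun s => w (s + 1)) t := by
  induction t with
  | zero => simp [polTraj]
  | succ t ih =>
      show A.mulVec (polTraj A B π x0 w (t + 1)) + _ + _ = _
      rw [ih]
      show _ = A.mulVec _ + B.mulVec (π (t + 1) (Fin.cons (w 0) _)) + w (t + 1)
      rw [← fin_window_eq_cons]

/-- Main lemma: the equivalence holds for every `k` when `𝒲` is nonempty. -/
lemma pre_set_iff_policy_aux {n p : ℕ}
    (A : Matrix (Fin n) (Fin n) ℝ) (B : Matrix (Fin n) (Fin p) ℝ)
    (𝒳 : Set (Fin n → ℝ)) (𝒰 : Set (Fin p → ℝ)) (𝒲 : Set (Fin n → ℝ))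
    (h𝒰 : 𝒰.Nonempty) (h𝒲 : 𝒲.Nonempty)
    (S : ℕ → Set (Fin n → ℝ))
    (hS0 : S 0 = 𝒳)
    (hSk : ∀ k, S (k + 1) =
      {x : Fin n → ℝ | ∃ u ∈ 𝒰, ∀ w ∈ 𝒲, A.mulVec x + B.mulVec u + w ∈ S k}) :
    ∀ k (x0 : Fin n → ℝ),
    x0 ∈ S k ↔
      ∃ π : (t : ℕ) → (Fin t → (Fin n → ℝ)) → (Fin p → ℝ),
        (∀ t, t < k → ∀ ws : Fin t → (Fin n → ℝ), (∀ s, ws s ∈ 𝒲) → π t ws ∈ 𝒰) ∧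
        ∀ w : ℕ → Fin n → ℝ, (∀ t, w t ∈ 𝒲) → polTraj A B π x0 w k ∈ 𝒳 := by
  intro k
  induction k with
  | zero =>
      intro x0
      rw [hS0]
      constructor
      · intro hx
        exact ⟨fun _ _ => h𝒰.choose, fun t ht => absurd ht (Nat.not_lt_zero t),
          fun w _ => hx⟩
      · rintro ⟨π, -, hπ⟩
        exact hπ (fun _ => h𝒲.choose) (fun _ => h𝒲.choose_spec)
  | succ k ih =>
      intro x0
      rw [hSk k]
      constructor
      · rintro ⟨u, hu, hnext⟩
        classical
        -- choose a policy for each possible first disturbance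
        set pol : (Fin n → ℝ) → (t : ℕ) → (Fin t → (Fin n → ℝ)) → (Fin p → ℝ) :=
          fun w0 =>
            if h : w0 ∈ 𝒲 then
              ((ih (A.mulVec x0 + B.mulVec u + w0)).mp (hnext w0 h)).choose
            else fun _ _ => h𝒰.choose with hpoldef
        have hpol : ∀ w0 (h : w0 ∈ 𝒲),
            (∀ t, t < k → ∀ ws : Fin t → (Fin n → ℝ),
                (∀ s, ws s ∈ 𝒲) → pol w0 t ws ∈ 𝒰) ∧
            ∀ w : ℕ → Fin n → ℝ, (∀ t, w t ∈ 𝒲) →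
              polTraj A B (pol w0) (A.mulVec x0 + B.mulVec u + w0) w k ∈ 𝒳 := by
          intro w0 h
          have := ((ih (A.mulVec x0 + B.mulVec u + w0)).mp (hnext w0 h)).choose_spec
          simpa [hpoldef, dif_pos h] using this
        refine ⟨fun t => match t with
          | 0 => fun _ => u
          | t + 1 => fun ws => pol (ws 0) t (fun s => ws s.succ), ?_, ?_⟩
        · intro t ht ws hws
          match t with
          | 0 => exact hu
          | t + 1 =>
              exact (hpol (ws 0) (hws 0)).1 t (Nat.lt_of_succ_lt_succ ht)
                (fun s => ws s.succ) (fun s => hws s.succ)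
        · intro w hw
          rw [polTraj_shift]
          have hx1 : A.mulVec x0 +
              B.mulVec ((fun t => match t with
                | 0 => fun _ => u
                | t + 1 => fun ws => pol (ws 0) t (fun s => ws s.succ) :
                  (t : ℕ) → (Fin t → (Fin n → ℝ)) → (Fin p → ℝ)) 0
                  (fun s : Fin 0 => w s)) + w 0
              = A.mulVec x0 + B.mulVec u + w 0 := rfl
          rw [hx1]
          have hshift : (fun t (ws : Fin t → (Fin n → ℝ)) =>
              (fun t => match t with
                | 0 => fun _ => u
                | t + 1 => fun ws => pol (ws 0) t (fun s => ws s.succ) :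
                  (t : ℕ) → (Fin t → (Fin n → ℝ)) → (Fin p → ℝ)) (t + 1)
                (Fin.cons (w 0) ws)) = pol (w 0) := by
            funext t ws
            simp [Fin.cons_succ]
          rw [hshift]
          exact (hpol (w 0) (hw 0)).2 (fun s => w (s + 1)) (fun t => hw (t + 1))
      · rintro ⟨π, hπU, hπX⟩
        refine ⟨π 0 (fun s => s.elim0), hπU 0 (Nat.succ_pos k) _ (fun s => s.elim0), ?_⟩
        intro w0 hw0
        apply (ih _).mpr
        refine ⟨fun t ws => π (t + 1) (Fin.cons w0 ws), ?_, ?_⟩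
        · intro t ht ws hws
          refine hπU (t + 1) (Nat.succ_lt_succ ht) _ ?_
          intro s
          refine Fin.cases ?_ (fun i => ?_) s
          · simpa using hw0
          · simpa [Fin.cons_succ] using hws i
        · intro w' hw'
          set w : ℕ → Fin n → ℝ := fun t => match t with
            | 0 => w0
            | t + 1 => w' t with hwdef
          have hw : ∀ t, w t ∈ 𝒲 := by
            intro t
            match t with
            | 0 => exact hw0
            | t + 1 => exact hw' t
          have := hπX w hw
          rw [polTraj_shift] at this
          have h0 : (fun s : Fin 0 => w s) = (fun s : Fin 0 => s.elim0) := by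
            funext s
            exact s.elim0
          rw [h0] at this
          have hw00 : w 0 = w0 := rfl
          have hwsucc : (fun s : ℕ => w (s + 1)) = w' := rfl
          rw [hw00, hwsucc] at this
          exact this

/-- if `𝒰` is nonempty, then for every `k ≥ 1`, `x₀ ∈ 𝒮ₖ` iff there
exist feedback policies `π₀ ∈ 𝒰` and `π_t : 𝒲^t → 𝒰` such that for every
disturbance realization in `𝒲^k` the resulting trajectory satisfies `x_k ∈ 𝒳`. -/
theorem pre_set_iff_policy {n p : ℕ}
    (A : Matrix (Fin n) (Fin n) ℝ) (B : Matrix (Fin n) (Fin p) ℝ)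
    (𝒳 : Set (Fin n → ℝ)) (𝒰 : Set (Fin p → ℝ)) (𝒲 : Set (Fin n → ℝ))
    (h𝒰 : 𝒰.Nonempty)
    (S : ℕ → Set (Fin n → ℝ))
    (hS0 : S 0 = 𝒳)
    (hSk : ∀ k, S (k + 1) =
      {x : Fin n → ℝ | ∃ u ∈ 𝒰, ∀ w ∈ 𝒲, A.mulVec x + B.mulVec u + w ∈ S k})
    (k : ℕ) (hk : 1 ≤ k) (x0 : Fin n → ℝ) :
    x0 ∈ S k ↔
      ∃ π : (t : ℕ) → (Fin t → (Fin n → ℝ)) → (Fin p → ℝ),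
        (∀ t, t < k → ∀ ws : Fin t → (Fin n → ℝ), (∀ s, ws s ∈ 𝒲) → π t ws ∈ 𝒰) ∧
        ∀ w : ℕ → Fin n → ℝ, (∀ t, w t ∈ 𝒲) → polTraj A B π x0 w k ∈ 𝒳 := by
  rcases 𝒲.eq_empty_or_nonempty with h𝒲 | h𝒲
  · subst h𝒲
    obtain ⟨m, rfl⟩ := Nat.exists_eq_add_of_le hk
    constructor
    · intro _
      refine ⟨fun t => match t with
        | 0 => fun _ => h𝒰.choose
        | t + 1 => fun ws => h𝒰.choose, ?_, ?_⟩
      · intro t ht ws hws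
        match t with
        | 0 => exact h𝒰.choose_spec
        | t + 1 => exact h𝒰.choose_spec
      · intro w hw
        exact absurd (hw 0) (Set.notMem_empty _)
    · intro _
      have h1m : 1 + m = m + 1 := Nat.add_comm 1 m
      rw [h1m, hSk m]
      exact ⟨h𝒰.choose, h𝒰.choose_spec, fun w hw => absurd hw (Set.notMem_empty _)⟩
  · exact pre_set_iff_policy_aux A B 𝒳 𝒰 𝒲 h𝒰 h𝒲 S hS0 hSk k x0
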